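/- arXiv:2511.17921 — 3 statements merged into one kernel-verified Lean document; each statement's English description precedes it below -/
import Mathlib

section
/- Let (V, μ) be a countable weighted rooted tree with finite total measure, with Hardy operator Tf(t) = (1/μ(S_t)) Σ_{s ⪰ t} |f(s)| μ(s). Then T is of weak type (1,1) with constant 1: for all f with Σ_{s∈V} |f(s)|μ(s) < ∞ and all λ > 0, the set V_{Tf}(λ) = {t ∈ V : Tf(t) > λ} satisfies μ(V_{Tf}(λ)) ≤ (1/λ) Σ_{s∈V} |f(s)| μ(s). -/
/-- Rooted tree encoded by a parent map: `s ⪰ t` iff `∃ n, p^[n] s = t`;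
the shadow of `t` is `S_t = {s | s ⪰ t}`. -/
def shadow {V : Type*} (p : V → V) (t : V) : Set V :=
  {s | ∃ n : ℕ, p^[n] s = t}

/-- The Hardy-type operator `Tf(t) = (1/μ(S_t)) ∑_{s ⪰ t} |f(s)| μ(s)`. -/
noncomputable def hardyOp {V : Type*} (p : V → V) (μ f : V → ℝ) (t : V) : ℝ :=
  (1 / ∑' s : shadow p t, μ s.1) * ∑' s : shadow p t, |f s.1| * μ s.1

lemma mem_shadow_self {V : Type*} (p : V → V) (t : V) : t ∈ shadow p t := ⟨0, rfl⟩

lemma shadow_nest {V : Type*} (p : V → V) {s t u : V} (hs : u ∈ shadow p s)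
    (ht : u ∈ shadow p t) : s ∈ shadow p t ∨ t ∈ shadow p s := by
  obtain ⟨m, hm⟩ := hs
  obtain ⟨n, hn⟩ := ht
  rcases le_total m n with h | h
  · exact Or.inl ⟨n - m, by
      rw [← hm, ← Function.iterate_add_apply, Nat.sub_add_cancel h, hn]⟩
  · exact Or.inr ⟨m - n, by
      rw [← hn, ← Function.iterate_add_apply, Nat.sub_add_cancel h, hm]⟩

/-- Every element of a set `E` has an ancestor in `E` that is maximal in `E`
(no strict ancestor of it lies in `E`). -/
lemma exists_maximal_ancestor {V : Type*} (p : V → V) (a : V)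
    (hroot : p a = a) (hreach : ∀ t : V, ∃ n : ℕ, p^[n] t = a)
    (E : Set V) {t : V} (ht : t ∈ E) :
    ∃ m, m ∈ E ∧ t ∈ shadow p m ∧ ∀ s ∈ E, m ∈ shadow p s → s = m := by
  classical
  obtain ⟨n₀, hn₀⟩ := hreach t
  have habs : ∀ n, n₀ ≤ n → p^[n] t = a := by
    intro n hn
    rw [← Nat.sub_add_cancel hn, Function.iterate_add_apply, hn₀,
      Function.iterate_fixed hroot]
  set P : ℕ → Prop := fun k => p^[k] t ∈ E with hP
  set k₀ := Nat.findGreatest P n₀ with hk₀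
  have hk₀le : k₀ ≤ n₀ := Nat.findGreatest_le _
  have hPk₀ : P k₀ := Nat.findGreatest_spec (Nat.zero_le _) ht
  refine ⟨p^[k₀] t, hPk₀, ⟨k₀, rfl⟩, ?_⟩
  rintro s hs ⟨j, hj⟩
  have hjk : p^[j + k₀] t = s := by
    rw [Function.iterate_add_apply]; exact hj
  by_cases hcase : j + k₀ ≤ n₀
  · have hPjk : P (j + k₀) := by rw [hP]; simp only [hjk]; exact hs
    have : j + k₀ ≤ k₀ := by
      by_contra hlt
      exact Nat.findGreatest_is_greatest (by omega) hcase hPjk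
    have hj0 : j = 0 := by omega
    rw [← hj, hj0, Function.iterate_zero_apply]
  · have hsa : s = a := by rw [← hjk]; exact habs _ (by omega)
    have hPn₀ : P n₀ := by rw [hP]; simp only [hn₀]; rw [← hsa] at *; exact hsa ▸ hs
    have : n₀ ≤ k₀ := Nat.le_findGreatest le_rfl hPn₀
    have hk : k₀ = n₀ := le_antisymm hk₀le this
    rw [hsa, hk, hn₀]

/-- The Hardy-type operator is of weak type `(1,1)` with constant 1:
`μ({t : Tf(t) > λ}) ≤ (1/λ) ‖f‖_{ℓ¹(V,μ)}`. -/
theorem hardy_weak_one_one {V : Type*} [Countable V] (p : V → V) (a : V)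
    (hroot : p a = a) (hreach : ∀ t : V, ∃ n : ℕ, p^[n] t = a)
    (μ : V → ℝ) (hμpos : ∀ t, 0 < μ t) (hμsum : Summable μ)
    (f : V → ℝ) (hf : Summable fun s => |f s| * μ s)
    (lam : ℝ) (hlam : 0 < lam) :
    (∑' t : {t : V | hardyOp p μ f t > lam}, μ t.1) ≤
      (1 / lam) * ∑' s : V, |f s| * μ s := by
  classical
  set E : Set V := {t : V | hardyOp p μ f t > lam} with hE
  set M : Set V := {t | t ∈ E ∧ ∀ s ∈ E, t ∈ shadow p s → s = t} with hM
  set G : V → ENNReal := fun x => ENNReal.ofReal (μ x) with hG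
  set F : V → ENNReal := fun x => ENNReal.ofReal (|f x| * μ x) with hF
  set c : ENNReal := ENNReal.ofReal (1 / lam) with hc
  have hfnn : ∀ x, 0 ≤ |f x| * μ x := fun x => mul_nonneg (abs_nonneg _) (hμpos x).le
  -- per-point estimate
  have key : ∀ t ∈ E, (∑' s : shadow p t, G s.1) ≤ c * ∑' s : shadow p t, F s.1 := by
    intro t ht
    have hμs : Summable (fun s : shadow p t => μ s.1) := hμsum.subtype _
    have hfs : Summable (fun s : shadow p t => |f s.1| * μ s.1) := hf.subtype _
    set A := ∑' s : shadow p t, μ s.1 with hA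
    set B := ∑' s : shadow p t, |f s.1| * μ s.1 with hB
    have hApos : 0 < A := lt_of_lt_of_le (hμpos t)
      (Summable.le_tsum hμs ⟨t, mem_shadow_self p t⟩ (fun _ _ => (hμpos _).le))
    have hop : (1 / A) * B > lam := ht
    have hlA : lam * A < B := by
      rw [one_div, inv_mul_eq_div, gt_iff_lt, lt_div_iff₀ hApos] at hop
      linarith [hop]
    have hAB : A ≤ (1 / lam) * B := by
      rw [one_div, inv_mul_eq_div, le_div_iff₀ hlam]
      nlinarith
    calc (∑' s : shadow p t, G s.1)
        = ENNReal.ofReal A := (ENNReal.ofReal_tsum_of_nonneg (fun s => (hμpos _).le) hμs).symm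
      _ ≤ ENNReal.ofReal ((1 / lam) * B) := ENNReal.ofReal_le_ofReal hAB
      _ = c * ENNReal.ofReal B := ENNReal.ofReal_mul (by positivity)
      _ = c * ∑' s : shadow p t, F s.1 := by
          rw [ENNReal.ofReal_tsum_of_nonneg (fun s => hfnn _) hfs]
  -- the sigma-type of shadows of maximal elements injects into V
  have hinj : Function.Injective
      (fun x : (Σ t : M, (shadow p (t : V) : Set V)) => (x.2 : V)) := by
    rintro ⟨⟨t₁, ht₁⟩, ⟨s₁, hs₁⟩⟩ ⟨⟨t₂, ht₂⟩, ⟨s₂, hs₂⟩⟩ h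
    simp only at h
    subst h
    have : t₁ = t₂ := by
      rcases shadow_nest p hs₁ hs₂ with h' | h'
      · exact (ht₁.2 t₂ ht₂.1 h').symm
      · exact ht₂.2 t₁ ht₁.1 h'
    subst this
    rfl
  -- main chain in ENNReal
  have main : (∑' t : E, G t.1) ≤ c * ∑' x : V, F x := by
    calc (∑' t : E, G t.1)
        ≤ ∑' x : (⋃ t : M, shadow p (t : V)), G x.1 := by
          apply ENNReal.tsum_mono_subtype
          intro x hx
          obtain ⟨m, hmE, hxm, hmax⟩ :=
            exists_maximal_ancestor p a hroot hreach E hx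
          exact Set.mem_iUnion.mpr ⟨⟨m, hmE, hmax⟩, hxm⟩
      _ ≤ ∑' t : M, ∑' x : shadow p (t : V), G x.1 := ENNReal.tsum_iUnion_le_tsum G _
      _ ≤ ∑' t : M, c * ∑' x : shadow p (t : V), F x.1 :=
          ENNReal.tsum_le_tsum (fun t => key t.1 t.2.1)
      _ = c * ∑' t : M, ∑' x : shadow p (t : V), F x.1 := ENNReal.tsum_mul_left
      _ = c * ∑' x : (Σ t : M, (shadow p (t : V) : Set V)), F x.2 := by
          rw [ENNReal.tsum_sigma']
      _ ≤ c * ∑' x : V, F x := by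
          gcongr
          exact ENNReal.tsum_comp_le_tsum_of_injective hinj F
  -- convert back to ℝ
  have hrhs : 0 ≤ (1 / lam) * ∑' s : V, |f s| * μ s := by
    apply mul_nonneg (by positivity)
    exact tsum_nonneg (fun s => hfnn s)
  rw [← ENNReal.ofReal_le_ofReal_iff hrhs]
  calc ENNReal.ofReal (∑' t : E, μ t.1)
      = ∑' t : E, G t.1 :=
        ENNReal.ofReal_tsum_of_nonneg (fun t => (hμpos _).le) (hμsum.subtype _)
    _ ≤ c * ∑' x : V, F x := main
    _ = ENNReal.ofReal ((1 / lam) * ∑' s : V, |f s| * μ s) := by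
        rw [ENNReal.ofReal_mul (by positivity),
          ENNReal.ofReal_tsum_of_nonneg (fun s => hfnn s) hf]
end

section
/- Let V = {n ∈ ℕ : n ≥ 2} be the path graph (n adjacent to n+1) rooted at 2, with weight μ(n) = 1/(n (ln n)^γ) for fixed γ > 1. Then μ(V) < ∞, but the ratio μ(S_n)/μ(n) satisfies μ(S_n)/μ(n) ≥ n·ln(n)/(γ−1) for all n ≥ 2; in particular there is no constant c with μ(S_n) ≤ c·μ(n) for all n. -/
/-!
`F(x) = (log x)^(1-γ)/(γ-1)` is an antiderivative of `-1/(x (log x)^γ)` and decreases to `0`.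
Since the weight is decreasing, the mean value theorem squeezes each increment `F(k) - F(k+1)`
between the weights of `k + 1` and `k`, so the series converges and its tail from `n` is at least
`F(n)`. Finally `F(n)` divided by the weight of `n` is exactly `n log n/(γ-1)`, which is unbounded.
-/

open Real Filter Topology Set

lemma hasSum_sub_succ_of_antitone {G : ℕ → ℝ} (hG : Antitone G) (hG0 : Tendsto G atTop (𝓝 0)) :
    HasSum (fun i => G i - G (i + 1)) (G 0) := by
  rw [hasSum_iff_tendsto_nat_of_nonneg fun i => sub_nonneg.2 (hG i.le_succ)]
  simp only [Finset.sum_range_sub']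
  simpa using (tendsto_const_nhds (x := G 0)).sub hG0

lemma sub_mem_Icc_of_hasDerivAt_neg {f F : ℝ → ℝ} {x : ℝ} (hf : AntitoneOn f (Icc x (x + 1)))
    (hF : ∀ y ∈ Icc x (x + 1), HasDerivAt F (-f y) y) :
    F x - F (x + 1) ∈ Icc (f (x + 1)) (f x) := by
  obtain ⟨c, hc, hslope⟩ := exists_hasDerivAt_eq_slope F (fun y => -f y) (lt_add_one x)
    (fun y hy => (hF y hy).continuousAt.continuousWithinAt)
    (fun y hy => hF y (Ioo_subset_Icc_self hy))
  have hFc : F x - F (x + 1) = f c := by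
    rw [add_sub_cancel_left, div_one] at hslope
    linarith
  have hc' : c ∈ Icc x (x + 1) := Ioo_subset_Icc_self hc
  rw [hFc]
  exact ⟨hf hc' (right_mem_Icc.2 (by linarith)) hc.2.le,
    hf (left_mem_Icc.2 (by linarith)) hc' hc.1.le⟩

/-- The integral test, with the integral replaced by an antiderivative. -/
lemma summable_nat_add_and_le_tsum_of_hasDerivAt {f F : ℝ → ℝ} {a : ℝ}
    (hf : AntitoneOn f (Ici a)) (hf0 : ∀ x ∈ Ici a, 0 ≤ f x)
    (hF : ∀ x ∈ Ici a, HasDerivAt F (-f x) x) (hF0 : Tendsto F atTop (𝓝 0)) :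
    Summable (fun i : ℕ => f (i + a)) ∧ F a ≤ ∑' i : ℕ, f (i + a) := by
  have nat_add_mem : ∀ i : ℕ, (i : ℝ) + a ∈ Ici a := fun i => by simp
  have mem : ∀ (i : ℕ) y, y ∈ Icc ((i : ℝ) + a) (i + a + 1) → y ∈ Ici a := fun i y hy =>
    le_trans (nat_add_mem i) hy.1
  have step : ∀ i : ℕ, F (i + a) - F ((i + 1 : ℕ) + a) ∈ Icc (f ((i + 1 : ℕ) + a)) (f (i + a)) := by
    intro i
    rw [Nat.cast_succ, add_right_comm]
    exact sub_mem_Icc_of_hasDerivAt_neg (hf.mono fun y => mem i y) fun y hy => hF y (mem i y hy)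
  have hsum : HasSum (fun i : ℕ => F (i + a) - F ((i + 1 : ℕ) + a)) (F a) := by
    simpa using hasSum_sub_succ_of_antitone (G := fun i : ℕ => F (i + a))
      (antitone_nat_of_succ_le fun i => sub_nonneg.1 ((hf0 _ (nat_add_mem _)).trans (step i).1))
      (hF0.comp (tendsto_atTop_add_const_right _ a tendsto_natCast_atTop_atTop))
  have hf_summable : Summable (fun i : ℕ => f (i + a)) :=
    (summable_nat_add_iff 1).1 <|
      hsum.summable.of_nonneg_of_le (fun i => hf0 _ (nat_add_mem _)) fun i => (step i).1
  exact ⟨hf_summable, hasSum_le (fun i => (step i).2) hsum hf_summable.hasSum⟩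

def Nat.equivSubtypeLe (n : ℕ) : ℕ ≃ {k : ℕ // n ≤ k} where
  toFun i := ⟨i + n, Nat.le_add_left n i⟩
  invFun k := k.1 - n
  left_inv i := Nat.add_sub_cancel i n
  right_inv k := Subtype.ext (Nat.sub_add_cancel k.2)

section LogWeight

variable {γ x : ℝ}

lemma one_div_mul_log_rpow_pos (hx : 1 < x) : 0 < 1 / (x * log x ^ γ) := by
  have := log_pos hx
  positivity

lemma antitoneOn_one_div_mul_log_rpow (hγ : 0 ≤ γ) :
    AntitoneOn (fun x : ℝ => 1 / (x * log x ^ γ)) (Ioi 1) := by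
  intro x hx y _ hxy
  have hlog := log_pos hx
  have hx0 : (0 : ℝ) < x := by linarith [mem_Ioi.1 hx]
  apply one_div_le_one_div_of_le (by positivity)
  gcongr
  linarith

lemma hasDerivAt_log_rpow_one_sub_div (hγ : γ ≠ 1) (hx : 1 < x) :
    HasDerivAt (fun x => log x ^ (1 - γ) / (γ - 1)) (-(1 / (x * log x ^ γ))) x := by
  have hlog := log_pos hx
  have h := ((hasDerivAt_rpow_const (p := 1 - γ) (Or.inl hlog.ne')).comp x
    (hasDerivAt_log (by linarith))).div_const (γ - 1)
  refine h.congr_deriv ?_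
  rw [show 1 - γ - 1 = -γ by ring, rpow_neg hlog.le]
  field_simp [sub_ne_zero.2 hγ]
  ring

lemma tendsto_log_rpow_one_sub_div_atTop (hγ : 1 < γ) :
    Tendsto (fun x => log x ^ (1 - γ) / (γ - 1)) atTop (𝓝 0) := by
  have h := ((tendsto_rpow_neg_atTop (by linarith : 0 < γ - 1)).comp tendsto_log_atTop).div_const
    (γ - 1)
  simpa [Function.comp_def] using h

lemma log_rpow_one_sub_div_div_one_div_mul_log_rpow (hx : 1 < x) :
    log x ^ (1 - γ) / (γ - 1) / (1 / (x * log x ^ γ)) = x * log x / (γ - 1) := by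
  have hlog := log_pos hx
  rw [div_div_eq_mul_div, div_one, rpow_sub hlog, rpow_one]
  field_simp

end LogWeight

lemma summable_and_log_rpow_div_le_tsum {γ : ℝ} (hγ : 1 < γ) {n : ℕ} (hn : 2 ≤ n) :
    (Summable fun k : {k : ℕ // n ≤ k} => 1 / ((k : ℝ) * log k ^ γ)) ∧
      log n ^ (1 - γ) / (γ - 1) ≤ ∑' k : {k : ℕ // n ≤ k}, 1 / ((k : ℝ) * log k ^ γ) := by
  have hn1 : (1 : ℝ) < n := by exact_mod_cast hn
  have h := summable_nat_add_and_le_tsum_of_hasDerivAt (a := n)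
    ((antitoneOn_one_div_mul_log_rpow (by linarith)).mono fun x hx => hn1.trans_le hx)
    (fun x hx => (one_div_mul_log_rpow_pos (hn1.trans_le hx)).le)
    (fun x hx => hasDerivAt_log_rpow_one_sub_div hγ.ne' (hn1.trans_le hx))
    (tendsto_log_rpow_one_sub_div_atTop hγ)
  rw [← (Nat.equivSubtypeLe n).summable_iff, ← (Nat.equivSubtypeLe n).tsum_eq]
  simpa [Nat.equivSubtypeLe, Function.comp_def] using h

lemma not_exists_le_const_mul_of_tendsto_div_atTop {S m : ℕ → ℝ} {N : ℕ}
    (hm : ∀ n, N ≤ n → 0 < m n) (h : Tendsto (fun n => S n / m n) atTop atTop) :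
    ¬ ∃ c, ∀ n, N ≤ n → S n ≤ c * m n := by
  rintro ⟨c, hc⟩
  obtain ⟨n, hcn, hNn⟩ := ((h.eventually_gt_atTop c).and (eventually_ge_atTop N)).exists
  exact (hcn.trans_le ((div_le_iff₀ (hm n hNn)).2 (hc n hNn))).false

/-- The path graph on the integers `n ≥ 2`, rooted at `2`, with weight
`μ(n) = 1/(n (ln n)^γ)`, `γ > 1`: the total measure is finite, but the shadow
`S_n = {k : k ≥ n}` satisfies `μ(S_n)/μ(n) ≥ n ln(n)/(γ-1)` for all `n ≥ 2`;
in particular no constant `c` satisfies `μ(S_n) ≤ c μ(n)` for all `n ≥ 2`. -/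
theorem path_graph_finite_measure_not_john (γ : ℝ) (hγ : 1 < γ) :
    (Summable fun n : {n : ℕ // 2 ≤ n} => 1 / ((n : ℝ) * Real.log n ^ γ)) ∧
    (∀ n : ℕ, 2 ≤ n →
      (n : ℝ) * Real.log n / (γ - 1) ≤
        (∑' k : {k : ℕ // n ≤ k}, 1 / ((k : ℝ) * Real.log k ^ γ)) /
          (1 / ((n : ℝ) * Real.log n ^ γ))) ∧
    ¬ ∃ c : ℝ, ∀ n : ℕ, 2 ≤ n →
      (∑' k : {k : ℕ // n ≤ k}, 1 / ((k : ℝ) * Real.log k ^ γ)) ≤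
        c * (1 / ((n : ℝ) * Real.log n ^ γ)) := by
  have one_lt : ∀ n : ℕ, 2 ≤ n → (1 : ℝ) < n := fun n hn => by exact_mod_cast hn
  have ratio : ∀ n : ℕ, 2 ≤ n → (n : ℝ) * log n / (γ - 1) ≤
      (∑' k : {k : ℕ // n ≤ k}, 1 / ((k : ℝ) * log k ^ γ)) / (1 / ((n : ℝ) * log n ^ γ)) := by
    intro n hn
    rw [← log_rpow_one_sub_div_div_one_div_mul_log_rpow (one_lt n hn)]
    exact div_le_div_of_nonneg_right (summable_and_log_rpow_div_le_tsum hγ hn).2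
      (one_div_mul_log_rpow_pos (one_lt n hn)).le
  have unbounded : Tendsto (fun n : ℕ => (n : ℝ) * log n / (γ - 1)) atTop atTop :=
    (tendsto_natCast_atTop_atTop.atTop_mul_atTop₀
      (tendsto_log_atTop.comp tendsto_natCast_atTop_atTop)).atTop_div_const (by linarith)
  refine ⟨(summable_and_log_rpow_div_le_tsum hγ le_rfl).1, ratio,
    not_exists_le_const_mul_of_tendsto_div_atTop
      (fun n hn => one_div_mul_log_rpow_pos (one_lt n hn)) ?_⟩
  exact tendsto_atTop_mono' _ (eventually_atTop.2 ⟨2, ratio⟩) unbounded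
end

section
/- Let (V, μ) be a weighted graph with a rooted spanning tree of degree bounded by M satisfying the John condition μ(S_t) ≤ c·μ(t) for all t. Then for every p ∈ (1,∞) and every f ∈ ℓ^p(V,μ) with Σ_{s∈V} f(s)μ(s) = 0, the global Poincaré inequality ‖f‖_{ℓ^p(V,μ)} ≤ C_P ‖|∇f|‖_{ℓ^p(V,μ)} holds with C_P ≤ c·M·2·p^{1−1/p}, where |∇f|(t) = Σ_{s∼t} |f(s)−f(t)| is the length of the gradient in the graph. -/
/-- The set of neighbours of `s` in the spanning tree determined by the parent map `p`. -/
def treeNbhd {V : Type*} (p : V → V) (s : V) : Set V :=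
  {t | (p t = s ∧ t ≠ s) ∨ (p s = t ∧ s ≠ t)}

/-- The length of the gradient of `f` at `t`: `|∇f|(t) = ∑_{s ~ t} |f(s) - f(t)|`. -/
noncomputable def gradLen {V : Type*} (G : SimpleGraph V) (f : V → ℝ) (t : V) : ℝ :=
  ∑' s : {s : V // G.Adj t s}, |f s.1 - f t|

/-!
Put `g t = |f t - f (pa t)|` and let `F s` be the sum of `g` over the tree path from `s` to the
root `a`, so that `|f s - f a| ≤ F s`. Since `F` grows by `g s` from `pa s` to `s`, the mean value
theorem gives `F s ^ p ≤ p ∑_{s ⪰ t} g t F t ^ (p - 1)`; summing against `μ` and exchanging the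
sums produces the weights `μ(S_t) ≤ c μ t`, and Hölder's inequality yields the Hardy inequality
`‖F‖_p ≤ p c ‖g‖_p` (first for `F` truncated at a level, so that `‖F‖_p` is finite and can be
divided out). For `M ≥ 2` this constant is at most `c M p^{1-1/p}` because `p^{1/p} ≤ 2`, while
trees of degree `M ≤ 1` have depth at most `M`, so that `F ≤ M g`. Finally, by Hölder's inequality
the mean-zero condition gives `|f a| μ(V)^{1/p} ≤ ‖f - f a‖_p`, hence `‖f‖_p ≤ 2 ‖f - f a‖_p` by
Minkowski's inequality.
-/

open scoped ENNReal

lemma le_rpow_add_one {x p : ℝ} (hx : 0 ≤ x) (hp : 1 ≤ p) : x ≤ x ^ p + 1 := by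
  rcases le_total x 1 with h | h
  · linarith [Real.rpow_nonneg hx p]
  · have := Real.rpow_le_rpow_of_exponent_le h hp
    rw [Real.rpow_one] at this
    linarith

lemma self_le_two_mul_rpow_one_sub_one_div {p : ℝ} (hp : 1 ≤ p) : p ≤ 2 * p ^ (1 - 1 / p) := by
  have hp0 : 0 < p := by linarith
  have hroot : p ^ (1 / p) ≤ 2 := by
    rw [one_div, Real.rpow_inv_le_iff_of_pos hp0.le zero_le_two hp0]
    have := one_add_mul_self_le_rpow_one_add (s := 1) (by norm_num) hp
    norm_num at this
    linarith
  calc p = p ^ (1 / p) * p ^ (1 - 1 / p) := by rw [← Real.rpow_add hp0]; simp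
    _ ≤ 2 * p ^ (1 - 1 / p) := by gcongr

lemma rpow_sub_rpow_le_mul {p : ℝ} (hp : 1 ≤ p) {x y : ℝ} (hy : 0 ≤ y) (hyx : y ≤ x) :
    x ^ p - y ^ p ≤ p * x ^ (p - 1) * (x - y) := by
  rcases hyx.eq_or_lt with rfl | hlt
  · simp
  have hslope := (convexOn_rpow hp).slope_le_of_hasDerivAt (Set.mem_Ici.2 hy)
    (Set.mem_Ici.2 (hy.trans hlt.le)) hlt (Real.hasDerivAt_rpow_const (Or.inr hp))
  rwa [slope_def_field, div_le_iff₀ (sub_pos.2 hlt)] at hslope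

lemma ENNReal.mul_rpow_le_of_mul_le_mul_rpow {p q : ℝ} (hpq : p.HolderConjugate q)
    {A c X : ℝ≥0∞} (hA : A ≠ ⊤) (h : c * A ≤ X * A ^ (1 / q)) : c * A ^ (1 / p) ≤ X := by
  rcases eq_or_ne A 0 with rfl | hA0
  · rw [ENNReal.zero_rpow_of_pos (one_div_pos.2 hpq.pos), mul_zero]
    exact zero_le
  have hAq0 : A ^ (1 / q) ≠ 0 := (ENNReal.rpow_pos (pos_iff_ne_zero.2 hA0) hA).ne'
  have hAqtop : A ^ (1 / q) ≠ ⊤ :=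
    ENNReal.rpow_ne_top_of_nonneg (one_div_nonneg.2 hpq.symm.nonneg) hA
  have hexp : 1 / p + 1 / q = 1 := by rw [one_div, one_div, hpq.inv_add_inv_eq_one]
  rwa [← ENNReal.mul_le_mul_iff_left hAq0 hAqtop, mul_assoc, ← ENNReal.rpow_add _ _ hA0 hA, hexp,
    ENNReal.rpow_one]

noncomputable def weightedLpNorm {V : Type*} (m : V → ℝ≥0∞) (p : ℝ) (φ : V → ℝ≥0∞) : ℝ≥0∞ :=
  (∑' s, φ s ^ p * m s) ^ (1 / p)

section WeightedLp

open MeasureTheory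

variable {V : Type*} {m : V → ℝ≥0∞} {p q : ℝ}

lemma lintegral_withDensity_count [MeasurableSpace V] [DiscreteMeasurableSpace V]
    (m F : V → ℝ≥0∞) : ∫⁻ s, F s ∂Measure.count.withDensity m = ∑' s, F s * m s := by
  rw [lintegral_withDensity_eq_lintegral_mul _ .of_discrete .of_discrete, lintegral_count]
  simp only [Pi.mul_apply, mul_comm]

lemma tsum_mul_mul_le_weightedLpNorm_mul (hpq : p.HolderConjugate q) (φ ψ : V → ℝ≥0∞) :
    ∑' s, φ s * ψ s * m s ≤ weightedLpNorm m p φ * weightedLpNorm m q ψ := by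
  let : MeasurableSpace V := ⊤
  have : DiscreteMeasurableSpace V := ⟨fun _ => trivial⟩
  simpa only [weightedLpNorm, lintegral_withDensity_count, Pi.mul_apply] using
    ENNReal.lintegral_mul_le_Lp_mul_Lq (Measure.count.withDensity m) hpq
      (Measurable.of_discrete (f := φ)).aemeasurable (Measurable.of_discrete (f := ψ)).aemeasurable

lemma weightedLpNorm_add_le (hp : 1 ≤ p) (φ ψ : V → ℝ≥0∞) :
    weightedLpNorm m p (φ + ψ) ≤ weightedLpNorm m p φ + weightedLpNorm m p ψ := by
  let : MeasurableSpace V := ⊤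
  have : DiscreteMeasurableSpace V := ⟨fun _ => trivial⟩
  simpa only [weightedLpNorm, lintegral_withDensity_count] using
    ENNReal.lintegral_Lp_add_le (μ := Measure.count.withDensity m)
      (Measurable.of_discrete (f := φ)).aemeasurable (Measurable.of_discrete (f := ψ)).aemeasurable
      hp

lemma weightedLpNorm_mono (hp : 0 ≤ p) {φ ψ : V → ℝ≥0∞} (h : ∀ s, φ s ≤ ψ s) :
    weightedLpNorm m p φ ≤ weightedLpNorm m p ψ :=
  ENNReal.rpow_le_rpow (ENNReal.tsum_le_tsum fun s => by gcongr; exact h s) (by positivity)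

lemma weightedLpNorm_const_mul (hp : 0 < p) (k : ℝ≥0∞) (φ : V → ℝ≥0∞) :
    weightedLpNorm m p (fun s => k * φ s) = k * weightedLpNorm m p φ := by
  simp only [weightedLpNorm, ENNReal.mul_rpow_of_nonneg _ _ hp.le, mul_assoc, ENNReal.tsum_mul_left]
  rw [ENNReal.mul_rpow_of_nonneg _ _ (by positivity), ← ENNReal.rpow_mul, mul_one_div_cancel hp.ne',
    ENNReal.rpow_one]

lemma weightedLpNorm_le_iff (hp : 0 < p) {φ : V → ℝ≥0∞} {X : ℝ≥0∞} :
    weightedLpNorm m p φ ≤ X ↔ ∑' s, φ s ^ p * m s ≤ X ^ p := by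
  rw [weightedLpNorm, one_div, ENNReal.rpow_inv_le_iff hp]

lemma weightedLpNorm_const (hp : 0 < p) (k : ℝ≥0∞) :
    weightedLpNorm m p (fun _ => k) = k * (∑' s, m s) ^ (1 / p) := by
  rw [weightedLpNorm, ENNReal.tsum_mul_left, ENNReal.mul_rpow_of_nonneg _ _ (by positivity),
    ← ENNReal.rpow_mul, mul_one_div_cancel hp.ne', ENNReal.rpow_one]

lemma weightedLpNorm_le_of_forall_min_le (hp : 0 < p) {F : V → ℝ} (hF : ∀ s, 0 ≤ F s) {X : ℝ≥0∞}
    (h : ∀ K, 0 ≤ K → weightedLpNorm m p (fun s => ENNReal.ofReal (min (F s) K)) ≤ X) :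
    weightedLpNorm m p (fun s => ENNReal.ofReal (F s)) ≤ X := by
  rw [weightedLpNorm_le_iff hp, ENNReal.tsum_eq_iSup_sum]
  refine iSup_le fun E => ?_
  have hK : ∀ s ∈ E, F s ≤ ∑ t ∈ E, F t := fun s hs => Finset.single_le_sum (fun t _ => hF t) hs
  calc ∑ s ∈ E, ENNReal.ofReal (F s) ^ p * m s
      = ∑ s ∈ E, ENNReal.ofReal (min (F s) (∑ t ∈ E, F t)) ^ p * m s :=
        Finset.sum_congr rfl fun s hs => by rw [min_eq_left (hK s hs)]
    _ ≤ ∑' s, ENNReal.ofReal (min (F s) (∑ t ∈ E, F t)) ^ p * m s := ENNReal.sum_le_tsum E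
    _ ≤ X ^ p := (weightedLpNorm_le_iff hp).1 (h _ (Finset.sum_nonneg fun t _ => hF t))

end WeightedLp

section RootedTree

variable {V : Type*} {pa : V → V} {a : V}

/-- Number of parent steps from `s` to the root `a` (junk value `0` if `a` is never reached). -/
noncomputable def rootDepth (pa : V → V) (a s : V) : ℕ :=
  sInf {n | pa^[n] s = a}

noncomputable def pathSum {M : Type*} [AddCommMonoid M] (pa : V → V) (a : V) (g : V → M)
    (s : V) : M :=
  ∑ n ∈ Finset.range (rootDepth pa a s), g (pa^[n] s)

lemma rootDepth_le {s : V} {n : ℕ} (h : pa^[n] s = a) : rootDepth pa a s ≤ n :=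
  Nat.sInf_le h

lemma rootDepth_self : rootDepth pa a a = 0 :=
  Nat.le_zero.1 (rootDepth_le rfl)

lemma iterate_rootDepth (hreach : ∀ s, ∃ n, pa^[n] s = a) (s : V) :
    pa^[rootDepth pa a s] s = a :=
  Nat.sInf_mem (hreach s)

lemma rootDepth_eq_zero_iff (hreach : ∀ s, ∃ n, pa^[n] s = a) {s : V} :
    rootDepth pa a s = 0 ↔ s = a :=
  ⟨fun h => by simpa [h] using iterate_rootDepth hreach s, fun h => h ▸ rootDepth_self⟩

lemma rootDepth_iterate (hreach : ∀ s, ∃ n, pa^[n] s = a) {s : V} {m : ℕ}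
    (hm : m ≤ rootDepth pa a s) : rootDepth pa a (pa^[m] s) = rootDepth pa a s - m := by
  have hle : rootDepth pa a (pa^[m] s) ≤ rootDepth pa a s - m := rootDepth_le <| by
    rw [← Function.iterate_add_apply, Nat.sub_add_cancel hm, iterate_rootDepth hreach]
  have hge : rootDepth pa a s ≤ rootDepth pa a (pa^[m] s) + m := rootDepth_le <| by
    rw [Function.iterate_add_apply, iterate_rootDepth hreach]
  omega

lemma rootDepth_parent_add_one (hreach : ∀ s, ∃ n, pa^[n] s = a) {s : V} (hs : s ≠ a) :
    rootDepth pa a (pa s) + 1 = rootDepth pa a s := by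
  have hpos : 1 ≤ rootDepth pa a s :=
    Nat.one_le_iff_ne_zero.2 fun h => hs ((rootDepth_eq_zero_iff hreach).1 h)
  have := rootDepth_iterate hreach hpos
  rw [Function.iterate_one] at this
  omega

lemma iterate_injOn_rootDepth (hreach : ∀ s, ∃ n, pa^[n] s = a) (s : V) :
    Set.InjOn (pa^[·] s) (Set.Iio (rootDepth pa a s)) := fun m hm n hn h => by
  have := congrArg (rootDepth pa a) h
  simp only at this
  rw [rootDepth_iterate hreach (le_of_lt hm), rootDepth_iterate hreach (le_of_lt hn)] at this
  simp only [Set.mem_Iio] at hm hn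
  omega

@[elab_as_elim]
theorem rootDepth_induction (hreach : ∀ s, ∃ n, pa^[n] s = a) {P : V → Prop} (root : P a)
    (step : ∀ s, s ≠ a → P (pa s) → P s) (s : V) : P s := by
  induction hd : rootDepth pa a s generalizing s with
  | zero => exact (rootDepth_eq_zero_iff hreach).1 hd ▸ root
  | succ n ih =>
    have hs : s ≠ a := fun h => by simp [h, rootDepth_self] at hd
    exact step s hs (ih (pa s) (by have := rootDepth_parent_add_one hreach hs; omega))

section PathSum

variable {M : Type*} [AddCommMonoid M]

@[simp]
lemma pathSum_self (g : V → M) : pathSum pa a g a = 0 := by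
  simp [pathSum, rootDepth_self]

lemma pathSum_of_ne (hreach : ∀ s, ∃ n, pa^[n] s = a) (g : V → M) {s : V} (hs : s ≠ a) :
    pathSum pa a g s = g s + pathSum pa a g (pa s) := by
  rw [pathSum, pathSum, ← rootDepth_parent_add_one hreach hs, Finset.sum_range_succ', add_comm]
  simp only [Function.iterate_succ_apply, Function.iterate_zero, id]

end PathSum

lemma pathSum_le_tsum_shadow (hreach : ∀ s, ∃ n, pa^[n] s = a) (w : V → ℝ≥0∞) (s : V) :
    pathSum pa a w s ≤ ∑' t, (shadow pa t).indicator (fun _ => w t) s := by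
  classical
  have hinj : Set.InjOn (pa^[·] s) (Finset.range (rootDepth pa a s)) := by
    simpa [Set.Iio] using iterate_injOn_rootDepth hreach s
  rw [pathSum, ← Finset.sum_image hinj]
  refine le_trans (le_of_eq (Finset.sum_congr rfl fun t ht => ?_)) (ENNReal.sum_le_tsum _)
  obtain ⟨n, -, rfl⟩ := Finset.mem_image.1 ht
  have hs : s ∈ shadow pa (pa^[n] s) := ⟨n, rfl⟩
  exact (Set.indicator_of_mem hs (fun _ => w (pa^[n] s))).symm

lemma tsum_pathSum_mul_le (hreach : ∀ s, ∃ n, pa^[n] s = a) (w m : V → ℝ≥0∞) :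
    ∑' s, pathSum pa a w s * m s ≤ ∑' t, w t * ∑' s : shadow pa t, m s :=
  calc ∑' s, pathSum pa a w s * m s
      ≤ ∑' s, ∑' t, (shadow pa t).indicator (fun _ => w t) s * m s := by
        simp_rw [ENNReal.tsum_mul_right]
        exact ENNReal.tsum_le_tsum fun s => by gcongr; exact pathSum_le_tsum_shadow hreach w s
    _ = ∑' t, w t * ∑' s : shadow pa t, m s := by
        rw [ENNReal.tsum_comm]
        refine tsum_congr fun t => ?_
        rw [tsum_subtype, ← ENNReal.tsum_mul_left]
        refine tsum_congr fun s => ?_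
        by_cases hs : s ∈ shadow pa t <;> simp [hs]

end RootedTree

section TreeDegree

variable {V : Type*} {pa : V → V} {a : V}

lemma parent_ne_self (hreach : ∀ s, ∃ n, pa^[n] s = a) {s : V} (hs : s ≠ a) : pa s ≠ s :=
  fun h => by have := rootDepth_parent_add_one hreach hs; rw [h] at this; omega

lemma one_le_ncard_treeNbhd (hreach : ∀ s, ∃ n, pa^[n] s = a) {s : V}
    (hfin : (treeNbhd pa s).Finite) (hs : s ≠ a) : 1 ≤ (treeNbhd pa s).ncard :=
  (Set.ncard_pos hfin).2 ⟨pa s, Or.inr ⟨rfl, (parent_ne_self hreach hs).symm⟩⟩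

lemma two_le_ncard_treeNbhd_parent (hreach : ∀ s, ∃ n, pa^[n] s = a) {s : V}
    (hfin : (treeNbhd pa (pa s)).Finite) (hs : s ≠ a) (hps : pa s ≠ a) :
    2 ≤ (treeNbhd pa (pa s)).ncard := by
  have hchild : s ∈ treeNbhd pa (pa s) := Or.inl ⟨rfl, (parent_ne_self hreach hs).symm⟩
  have hparent : pa (pa s) ∈ treeNbhd pa (pa s) :=
    Or.inr ⟨rfl, (parent_ne_self hreach hps).symm⟩
  have hne : s ≠ pa (pa s) := fun h => by
    have h1 := rootDepth_parent_add_one hreach hs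
    have h2 := rootDepth_parent_add_one hreach hps
    rw [← h] at h2
    omega
  rw [← Set.ncard_pair hne]
  exact Set.ncard_le_ncard (Set.pair_subset hchild hparent) hfin

lemma rootDepth_le_of_ncard_treeNbhd_le (hreach : ∀ s, ∃ n, pa^[n] s = a) {M : ℕ} (hM : M ≤ 1)
    (hdeg : ∀ s, (treeNbhd pa s).Finite ∧ (treeNbhd pa s).ncard ≤ M) (s : V) :
    rootDepth pa a s ≤ M := by
  by_contra! hlt
  have hs : s ≠ a := fun h => by simp [h, rootDepth_self] at hlt
  interval_cases M
  · have := one_le_ncard_treeNbhd hreach (hdeg s).1 hs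
    have := (hdeg s).2
    omega
  · have hps : pa s ≠ a := fun h => by
      have := rootDepth_parent_add_one hreach hs
      rw [h, rootDepth_self] at this
      omega
    have := two_le_ncard_treeNbhd_parent hreach (hdeg (pa s)).1 hs hps
    have := (hdeg (pa s)).2
    omega

end TreeDegree

section Hardy

variable {V : Type*} {pa : V → V} {a : V}

lemma ofReal_pathSum_le (g : V → ℝ) (s : V) :
    ENNReal.ofReal (pathSum pa a g s) ≤ pathSum pa a (fun t => ENNReal.ofReal (g t)) s :=
  Finset.le_sum_of_subadditive _ ENNReal.ofReal_zero.le (fun _ _ => ENNReal.ofReal_add_le) _ _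

lemma rpow_le_mul_pathSum (hreach : ∀ s, ∃ n, pa^[n] s = a) {p : ℝ} (hp : 1 ≤ p)
    {g φ : V → ℝ} (hφ : ∀ s, 0 ≤ φ s) (hφa : φ a = 0) (hmono : ∀ s, s ≠ a → φ (pa s) ≤ φ s)
    (hinc : ∀ s, s ≠ a → φ s ≤ φ (pa s) + g s) (s : V) :
    φ s ^ p ≤ p * pathSum pa a (fun t => g t * φ t ^ (p - 1)) s := by
  refine rootDepth_induction hreach ?_ (fun s hs ih => ?_) s
  · rw [hφa, Real.zero_rpow (by positivity), pathSum_self, mul_zero]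
  · have hmvt := rpow_sub_rpow_le_mul hp (hφ (pa s)) (hmono s hs)
    have hpow : 0 ≤ p * φ s ^ (p - 1) := by have := hφ s; positivity
    rw [pathSum_of_ne hreach _ hs]
    nlinarith [mul_le_mul_of_nonneg_left (hinc s hs) hpow]

lemma weightedLpNorm_le_of_bounded (hreach : ∀ s, ∃ n, pa^[n] s = a) {m : V → ℝ≥0∞}
    {C : ℝ≥0∞} (hjohn : ∀ t, ∑' s : shadow pa t, m s ≤ C * m t) (hm : ∑' s, m s ≠ ⊤)
    {p q : ℝ} (hpq : p.HolderConjugate q) {g φ : V → ℝ} {K : ℝ} (hφK : ∀ s, φ s ≤ K)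
    (hφ : ∀ s, 0 ≤ φ s) (hφa : φ a = 0) (hmono : ∀ s, s ≠ a → φ (pa s) ≤ φ s)
    (hinc : ∀ s, s ≠ a → φ s ≤ φ (pa s) + g s) :
    weightedLpNorm m p (fun s => ENNReal.ofReal (φ s)) ≤
      ENNReal.ofReal p * C * weightedLpNorm m p (fun s => ENNReal.ofReal (g s)) := by
  have hp0 := hpq.pos
  set A := ∑' s, ENNReal.ofReal (φ s) ^ p * m s
  set w : V → ℝ≥0∞ := fun t => ENNReal.ofReal (g t) * ENNReal.ofReal (φ t) ^ (p - 1)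
  have hAtop : A ≠ ⊤ := by
    refine ne_top_of_le_ne_top ?_ (ENNReal.tsum_le_tsum fun s =>
      mul_le_mul_left (ENNReal.rpow_le_rpow (ENNReal.ofReal_le_ofReal (hφK s)) hp0.le) (m s))
    rw [ENNReal.tsum_mul_left]
    exact ENNReal.mul_ne_top (ENNReal.rpow_ne_top_of_nonneg hp0.le ENNReal.ofReal_ne_top) hm
  have hpoint : ∀ s, ENNReal.ofReal (φ s) ^ p ≤ ENNReal.ofReal p * pathSum pa a w s := by
    intro s
    rw [ENNReal.ofReal_rpow_of_nonneg (hφ s) hp0.le]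
    refine (ENNReal.ofReal_le_ofReal
      (rpow_le_mul_pathSum hreach hpq.lt.le hφ hφa hmono hinc s)).trans ?_
    rw [ENNReal.ofReal_mul hp0.le]
    refine mul_le_mul_right ((ofReal_pathSum_le _ s).trans (le_of_eq ?_)) _
    congr 1
    funext t
    rw [ENNReal.ofReal_mul' (Real.rpow_nonneg (hφ t) _),
      ← ENNReal.ofReal_rpow_of_nonneg (hφ t) (sub_nonneg.2 hpq.lt.le)]
  have hwq : weightedLpNorm m q (fun t => ENNReal.ofReal (φ t) ^ (p - 1)) = A ^ (1 / q) := by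
    simp only [weightedLpNorm, ← ENNReal.rpow_mul, hpq.sub_one_mul_conj, A]
  have key : 1 * A ≤ ENNReal.ofReal p * C * weightedLpNorm m p (fun s => ENNReal.ofReal (g s)) *
      A ^ (1 / q) :=
    calc 1 * A ≤ ∑' s, ENNReal.ofReal p * pathSum pa a w s * m s :=
          (one_mul A).trans_le (ENNReal.tsum_le_tsum fun s => mul_le_mul_left (hpoint s) _)
      _ ≤ ENNReal.ofReal p * ∑' t, w t * ∑' s : shadow pa t, m s := by
          simp_rw [mul_assoc, ENNReal.tsum_mul_left]
          exact mul_le_mul_right (tsum_pathSum_mul_le hreach w m) _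
      _ ≤ ENNReal.ofReal p * ∑' t, w t * (C * m t) := by gcongr with t; exact hjohn t
      _ = ENNReal.ofReal p * C *
            ∑' t, ENNReal.ofReal (g t) * ENNReal.ofReal (φ t) ^ (p - 1) * m t := by
          rw [mul_assoc]
          congr 1
          rw [← ENNReal.tsum_mul_left]
          exact tsum_congr fun t => by ring
      _ ≤ ENNReal.ofReal p * C * (weightedLpNorm m p (fun s => ENNReal.ofReal (g s)) *
            weightedLpNorm m q (fun t => ENNReal.ofReal (φ t) ^ (p - 1))) := by
          gcongr
          exact tsum_mul_mul_le_weightedLpNorm_mul hpq _ _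
      _ = _ := by rw [hwq]; ring
  simpa [weightedLpNorm] using ENNReal.mul_rpow_le_of_mul_le_mul_rpow hpq hAtop key

theorem weightedLpNorm_pathSum_le (hreach : ∀ s, ∃ n, pa^[n] s = a) {m : V → ℝ≥0∞}
    {C : ℝ≥0∞} (hjohn : ∀ t, ∑' s : shadow pa t, m s ≤ C * m t) (hm : ∑' s, m s ≠ ⊤)
    {p q : ℝ} (hpq : p.HolderConjugate q) {g : V → ℝ} (hg : ∀ s, 0 ≤ g s) :
    weightedLpNorm m p (fun s => ENNReal.ofReal (pathSum pa a g s)) ≤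
      ENNReal.ofReal p * C * weightedLpNorm m p (fun s => ENNReal.ofReal (g s)) := by
  have hF : ∀ s, 0 ≤ pathSum pa a g s := fun s => Finset.sum_nonneg fun n _ => hg _
  refine weightedLpNorm_le_of_forall_min_le hpq.pos hF fun K hK => ?_
  refine weightedLpNorm_le_of_bounded hreach hjohn hm hpq (K := K) (fun s => min_le_right _ _)
    (fun s => le_min (hF s) hK) (by simp [hK]) (fun s hs => ?_) (fun s hs => ?_)
  all_goals rw [pathSum_of_ne hreach g hs, add_comm]
  · exact min_le_min_right _ (le_add_of_nonneg_right (hg s))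
  · exact (min_le_min_left _ (le_add_of_nonneg_right (hg s))).trans (min_add_add_right _ _ _).le

lemma one_le_of_tsum_shadow_le {m : V → ℝ≥0∞} {C : ℝ≥0∞} {t : V} (ht0 : m t ≠ 0)
    (httop : m t ≠ ⊤) (h : ∑' s : shadow pa t, m s ≤ C * m t) : 1 ≤ C := by
  rw [← ENNReal.mul_le_mul_iff_left ht0 httop, one_mul]
  exact (ENNReal.le_tsum (⟨t, 0, rfl⟩ : shadow pa t)).trans h

lemma pathSum_le_mul_of_rootDepth_le {g : V → ℝ} (hg : ∀ s, 0 ≤ g s) {M : ℕ} (hM : M ≤ 1)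
    {s : V} (hs : rootDepth pa a s ≤ M) : pathSum pa a g s ≤ M * g s := by
  rw [pathSum]
  interval_cases M <;> interval_cases rootDepth pa a s <;> simp [hg s]

theorem weightedLpNorm_pathSum_le_of_ncard_treeNbhd_le (hreach : ∀ s, ∃ n, pa^[n] s = a)
    {m : V → ℝ≥0∞} (hm0 : ∀ t, m t ≠ 0) (hm : ∑' s, m s ≠ ⊤) {C : ℝ≥0∞}
    (hjohn : ∀ t, ∑' s : shadow pa t, m s ≤ C * m t) {M : ℕ}
    (hdeg : ∀ s, (treeNbhd pa s).Finite ∧ (treeNbhd pa s).ncard ≤ M) {p : ℝ} (hp : 1 < p)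
    {g : V → ℝ} (hg : ∀ s, 0 ≤ g s) :
    weightedLpNorm m p (fun s => ENNReal.ofReal (pathSum pa a g s)) ≤
      C * M * ENNReal.ofReal (p ^ (1 - 1 / p)) *
        weightedLpNorm m p (fun s => ENNReal.ofReal (g s)) := by
  have hp0 : 0 < p := by linarith
  rcases le_or_gt M 1 with hM | hM
  · have hC : 1 ≤ C := one_le_of_tsum_shadow_le (hm0 a)
      (ne_top_of_le_ne_top hm (ENNReal.le_tsum a)) (hjohn a)
    have hpow : 1 ≤ ENNReal.ofReal (p ^ (1 - 1 / p)) := by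
      rw [ENNReal.one_le_ofReal]
      exact Real.one_le_rpow hp.le (by rw [sub_nonneg, div_le_one hp0]; exact hp.le)
    calc weightedLpNorm m p (fun s => ENNReal.ofReal (pathSum pa a g s))
        ≤ weightedLpNorm m p (fun s => M * ENNReal.ofReal (g s)) := by
          refine weightedLpNorm_mono hp0.le fun s => ?_
          rw [← ENNReal.ofReal_natCast, ← ENNReal.ofReal_mul (Nat.cast_nonneg M)]
          exact ENNReal.ofReal_le_ofReal <| pathSum_le_mul_of_rootDepth_le hg hM
            (rootDepth_le_of_ncard_treeNbhd_le hreach hM hdeg s)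
      _ = 1 * M * 1 * weightedLpNorm m p (fun s => ENNReal.ofReal (g s)) := by
          rw [weightedLpNorm_const_mul hp0, one_mul, mul_one]
      _ ≤ _ := by gcongr
  · calc weightedLpNorm m p (fun s => ENNReal.ofReal (pathSum pa a g s))
        ≤ ENNReal.ofReal p * C * weightedLpNorm m p (fun s => ENNReal.ofReal (g s)) :=
          weightedLpNorm_pathSum_le hreach hjohn hm (Real.HolderConjugate.conjExponent hp) hg
      _ ≤ M * ENNReal.ofReal (p ^ (1 - 1 / p)) * C *
            weightedLpNorm m p (fun s => ENNReal.ofReal (g s)) := by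
          gcongr
          rw [← ENNReal.ofReal_natCast, ← ENNReal.ofReal_mul (Nat.cast_nonneg M)]
          refine ENNReal.ofReal_le_ofReal ((self_le_two_mul_rpow_one_sub_one_div hp.le).trans ?_)
          gcongr
          exact_mod_cast hM
      _ = _ := by ring

end Hardy

section Poincare

variable {V : Type*}

lemma summable_mul_of_summable_abs_rpow_mul {μ : V → ℝ} (hμ : ∀ s, 0 ≤ μ s) (hμsum : Summable μ)
    {p : ℝ} (hp : 1 ≤ p) {f : V → ℝ} (hf : Summable fun s => |f s| ^ p * μ s) :
    Summable fun s => f s * μ s := by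
  refine Summable.of_norm_bounded (hf.add hμsum) fun s => ?_
  rw [Real.norm_eq_abs, abs_mul, abs_of_nonneg (hμ s), ← add_one_mul]
  exact mul_le_mul_of_nonneg_right (le_rpow_add_one (abs_nonneg _) hp) (hμ s)

lemma ofReal_abs_mul_le_weightedLpNorm_sub {μ : V → ℝ} (hμ : ∀ s, 0 ≤ μ s) (hμsum : Summable μ)
    {p q : ℝ} (hpq : p.HolderConjugate q) {f : V → ℝ} (hfμ : Summable fun s => f s * μ s)
    (hmean : ∑' s, f s * μ s = 0) (k : ℝ) :
    ENNReal.ofReal |k| * (∑' s, ENNReal.ofReal (μ s)) ^ (1 / p) ≤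
      weightedLpNorm (fun s => ENNReal.ofReal (μ s)) p (fun s => ENNReal.ofReal |f s - k|) := by
  set m : V → ℝ≥0∞ := fun s => ENNReal.ofReal (μ s)
  have hW : ∑' s, m s = ENNReal.ofReal (∑' s, μ s) := (ENNReal.ofReal_tsum_of_nonneg hμ hμsum).symm
  have hsum : ∑' s, (k - f s) * μ s = k * ∑' s, μ s := by
    simp_rw [sub_mul]
    rw [(hμsum.mul_left k).tsum_sub hfμ, hmean, sub_zero, tsum_mul_left]
  refine ENNReal.mul_rpow_le_of_mul_le_mul_rpow hpq (hW ▸ ENNReal.ofReal_ne_top) ?_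
  calc ENNReal.ofReal |k| * ∑' s, m s = ‖∑' s, (k - f s) * μ s‖ₑ := by
        rw [hsum, hW, Real.enorm_eq_ofReal_abs, abs_mul, abs_of_nonneg (tsum_nonneg hμ),
          ENNReal.ofReal_mul (abs_nonneg k)]
    _ ≤ ∑' s, ‖(k - f s) * μ s‖ₑ := enorm_tsum_le_tsum_enorm
    _ = ∑' s, ENNReal.ofReal |f s - k| * 1 * m s := tsum_congr fun s => by
        rw [Real.enorm_eq_ofReal_abs, abs_mul, abs_sub_comm, abs_of_nonneg (hμ s),
          ENNReal.ofReal_mul (abs_nonneg _), mul_one]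
    _ ≤ weightedLpNorm m p (fun s => ENNReal.ofReal |f s - k|) * weightedLpNorm m q (fun _ => 1) :=
        tsum_mul_mul_le_weightedLpNorm_mul hpq _ _
    _ = _ := by simp [weightedLpNorm]

lemma weightedLpNorm_le_two_mul_of_tsum_mul_eq_zero {μ : V → ℝ} (hμ : ∀ s, 0 ≤ μ s)
    (hμsum : Summable μ) {p : ℝ} (hp : 1 < p) {f : V → ℝ}
    (hfμ : Summable fun s => f s * μ s) (hmean : ∑' s, f s * μ s = 0) (k : ℝ) :
    weightedLpNorm (fun s => ENNReal.ofReal (μ s)) p (fun s => ENNReal.ofReal |f s|) ≤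
      2 * weightedLpNorm (fun s => ENNReal.ofReal (μ s)) p (fun s => ENNReal.ofReal |f s - k|) := by
  set m : V → ℝ≥0∞ := fun s => ENNReal.ofReal (μ s)
  calc weightedLpNorm m p (fun s => ENNReal.ofReal |f s|)
      ≤ weightedLpNorm m p ((fun s => ENNReal.ofReal |f s - k|) + fun _ => ENNReal.ofReal |k|) := by
        refine weightedLpNorm_mono (by linarith) fun s => ?_
        rw [Pi.add_apply, ← ENNReal.ofReal_add (abs_nonneg _) (abs_nonneg _)]
        exact ENNReal.ofReal_le_ofReal (by simpa using abs_add_le (f s - k) k)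
    _ ≤ weightedLpNorm m p (fun s => ENNReal.ofReal |f s - k|) +
          ENNReal.ofReal |k| * (∑' s, m s) ^ (1 / p) := by
        refine (weightedLpNorm_add_le hp.le _ _).trans (le_of_eq ?_)
        rw [weightedLpNorm_const (by linarith)]
    _ ≤ 2 * weightedLpNorm m p (fun s => ENNReal.ofReal |f s - k|) := by
        rw [two_mul]
        gcongr
        exact ofReal_abs_mul_le_weightedLpNorm_sub hμ hμsum (Real.HolderConjugate.conjExponent hp)
          hfμ hmean k

lemma tsum_ofReal_rpow_mul_eq {μ φ : V → ℝ} (hφ : ∀ s, 0 ≤ φ s) {p : ℝ} (hp : 0 ≤ p) :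
    (∑' s, ENNReal.ofReal (φ s ^ p * μ s)) ^ (1 / p) =
      weightedLpNorm (fun s => ENNReal.ofReal (μ s)) p (fun s => ENNReal.ofReal (φ s)) := by
  refine congrArg (· ^ (1 / p)) (tsum_congr fun s => ?_)
  rw [ENNReal.ofReal_mul (Real.rpow_nonneg (hφ s) p), ENNReal.ofReal_rpow_of_nonneg (hφ s) hp]

lemma gradLen_nonneg (G : SimpleGraph V) (f : V → ℝ) (t : V) : 0 ≤ gradLen G f t :=
  tsum_nonneg fun _ => abs_nonneg _

lemma abs_sub_le_gradLen {G : SimpleGraph V} {t : V} (hfin : {s | G.Adj t s}.Finite) (f : V → ℝ)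
    {s : V} (h : G.Adj t s) : |f s - f t| ≤ gradLen G f t := by
  have : Finite {s // G.Adj t s} := hfin.to_subtype
  exact Summable.of_finite.le_tsum (f := fun s : {s // G.Adj t s} => |f s.1 - f t|) ⟨s, h⟩
    fun _ _ => abs_nonneg _

lemma abs_sub_le_pathSum {pa : V → V} {a : V} (hreach : ∀ s, ∃ n, pa^[n] s = a) (f : V → ℝ)
    (s : V) : |f s - f a| ≤ pathSum pa a (fun t => |f t - f (pa t)|) s := by
  refine rootDepth_induction hreach (by simp) (fun s hs ih => ?_) s
  rw [pathSum_of_ne hreach _ hs]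
  exact (abs_sub_le (f s) (f (pa s)) (f a)).trans (add_le_add le_rfl ih)

lemma abs_sub_parent_le_gradLen {G : SimpleGraph V} (hlf : ∀ t, {s | G.Adj t s}.Finite)
    {pa : V → V} {a : V} (hroot : pa a = a) (htree : ∀ t, t ≠ a → G.Adj t (pa t)) (f : V → ℝ)
    (t : V) : |f t - f (pa t)| ≤ gradLen G f t := by
  rcases eq_or_ne t a with rfl | ht
  · simpa [hroot] using gradLen_nonneg G f t
  · rw [abs_sub_comm]
    exact abs_sub_le_gradLen (hlf t) f (htree t ht)

lemma tsum_shadow_ofReal_le {pa : V → V} {μ : V → ℝ} (hμ : ∀ s, 0 ≤ μ s) (hμsum : Summable μ)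
    {c : ℝ} (hc : 0 ≤ c) (hjohn : ∀ t, ∑' s : shadow pa t, μ s ≤ c * μ t) (t : V) :
    ∑' s : shadow pa t, ENNReal.ofReal (μ s) ≤ ENNReal.ofReal c * ENNReal.ofReal (μ t) := by
  rw [← ENNReal.ofReal_tsum_of_nonneg (f := fun s : shadow pa t => μ s) (fun s => hμ s)
    (hμsum.subtype _), ← ENNReal.ofReal_mul hc]
  exact ENNReal.ofReal_le_ofReal (hjohn t)

end Poincare

theorem global_poincare_general {V : Type*} (G : SimpleGraph V)
    (hlf : ∀ t : V, {s : V | G.Adj t s}.Finite)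
    (pa : V → V) (a : V)
    (hroot : pa a = a) (hreach : ∀ t : V, ∃ n : ℕ, pa^[n] t = a)
    (htree : ∀ t : V, t ≠ a → G.Adj t (pa t))
    (μ : V → ℝ) (hμpos : ∀ t, 0 < μ t) (hμsum : Summable μ)
    (c : ℝ) (hc : 0 < c)
    (hjohn : ∀ t : V, (∑' s : shadow pa t, μ s.1) ≤ c * μ t)
    (M : ℕ) (hdeg : ∀ s : V, (treeNbhd pa s).Finite ∧ (treeNbhd pa s).ncard ≤ M)
    (p : ℝ) (hp : 1 < p)
    (f : V → ℝ) (hf : Summable fun s => |f s| ^ p * μ s)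
    (hmean : (∑' s : V, f s * μ s) = 0) :
    (∑' s : V, ENNReal.ofReal (|f s| ^ p * μ s)) ^ (1 / p) ≤
      ENNReal.ofReal (c * M * 2 * p ^ (1 - 1 / p)) *
        (∑' t : V, ENNReal.ofReal (gradLen G f t ^ p * μ t)) ^ (1 / p) := by
  have hp0 : 0 < p := by linarith
  have hμ : ∀ t, 0 ≤ μ t := fun t => (hμpos t).le
  set m : V → ℝ≥0∞ := fun s => ENNReal.ofReal (μ s)
  set g : V → ℝ := fun t => |f t - f (pa t)|
  rw [tsum_ofReal_rpow_mul_eq (fun s => abs_nonneg (f s)) hp0.le,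
    tsum_ofReal_rpow_mul_eq (gradLen_nonneg G f) hp0.le]
  calc weightedLpNorm m p (fun s => ENNReal.ofReal |f s|)
      ≤ 2 * weightedLpNorm m p (fun s => ENNReal.ofReal |f s - f a|) :=
        weightedLpNorm_le_two_mul_of_tsum_mul_eq_zero hμ hμsum hp
          (summable_mul_of_summable_abs_rpow_mul hμ hμsum hp.le hf) hmean (f a)
    _ ≤ 2 * weightedLpNorm m p (fun s => ENNReal.ofReal (pathSum pa a g s)) := by
        gcongr
        exact weightedLpNorm_mono hp0.le fun s =>
          ENNReal.ofReal_le_ofReal (abs_sub_le_pathSum hreach f s)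
    _ ≤ 2 * (ENNReal.ofReal c * M * ENNReal.ofReal (p ^ (1 - 1 / p)) *
          weightedLpNorm m p (fun s => ENNReal.ofReal (g s))) := by
        gcongr
        exact weightedLpNorm_pathSum_le_of_ncard_treeNbhd_le hreach
          (fun t => (ENNReal.ofReal_pos.2 (hμpos t)).ne')
          (ENNReal.ofReal_tsum_of_nonneg hμ hμsum ▸ ENNReal.ofReal_ne_top)
          (tsum_shadow_ofReal_le hμ hμsum hc.le hjohn) hdeg hp fun t => abs_nonneg _
    _ ≤ 2 * (ENNReal.ofReal c * M * ENNReal.ofReal (p ^ (1 - 1 / p)) *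
          weightedLpNorm m p (fun t => ENNReal.ofReal (gradLen G f t))) := by
        gcongr
        exact weightedLpNorm_mono hp0.le fun t =>
          ENNReal.ofReal_le_ofReal (abs_sub_parent_le_gradLen hlf hroot htree f t)
    _ = _ := by
        rw [ENNReal.ofReal_mul (by positivity), ENNReal.ofReal_mul (by positivity),
          ENNReal.ofReal_mul hc.le, ENNReal.ofReal_natCast, ENNReal.ofReal_ofNat]
        ring

/-- Global `ℓ^p`-Poincaré inequality, `1 < p < ∞`: on a weighted connected locally finite
graph with a rooted spanning tree of tree-degree at most `M` satisfying the John condition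
`μ(S_t) ≤ c μ(t)`, every mean-zero `f ∈ ℓ^p(V,μ)` satisfies
`‖f‖_{ℓ^p(V,μ)} ≤ C_P ‖|∇f|‖_{ℓ^p(V,μ)}` with `C_P ≤ c M 2 p^{1-1/p}`
(the norms are computed in `[0,∞]`, so no summability of the gradient is assumed). -/
theorem global_poincare {V : Type*} [Countable V] (G : SimpleGraph V) (hG : G.Connected)
    (hlf : ∀ t : V, {s : V | G.Adj t s}.Finite)
    (pa : V → V) (a : V)
    (hroot : pa a = a) (hreach : ∀ t : V, ∃ n : ℕ, pa^[n] t = a)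
    (htree : ∀ t : V, t ≠ a → G.Adj t (pa t))
    (μ : V → ℝ) (hμpos : ∀ t, 0 < μ t) (hμsum : Summable μ)
    (c : ℝ) (hc : 0 < c)
    (hjohn : ∀ t : V, (∑' s : shadow pa t, μ s.1) ≤ c * μ t)
    (M : ℕ) (hdeg : ∀ s : V, (treeNbhd pa s).Finite ∧ (treeNbhd pa s).ncard ≤ M)
    (p : ℝ) (hp : 1 < p)
    (f : V → ℝ) (hf : Summable fun s => |f s| ^ p * μ s)
    (hmean : (∑' s : V, f s * μ s) = 0) :
    (∑' s : V, ENNReal.ofReal (|f s| ^ p * μ s)) ^ (1 / p) ≤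
      ENNReal.ofReal (c * M * 2 * p ^ (1 - 1 / p)) *
        (∑' t : V, ENNReal.ofReal (gradLen G f t ^ p * μ t)) ^ (1 / p) :=
  global_poincare_general G hlf pa a hroot hreach htree μ hμpos hμsum c hc hjohn M hdeg p hp f hf
    hmean
end
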